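/- Let p ∈ (0,1), let w₀ ∈ ℂ with w₀ ≠ 0, let f ∈ Σ*(p,w₀) with associated function P holomorphic on 𝔻, let ω be the Schwarz function with P = (1 + ω)/(1 − ω), and set c₁ = ω'(0). Then |a₂(f) − 1/p − p (c₁² + p² − 2 c₁ p)/(1 + p² − 2 c₁ p)| ≤ p (1 − |c₁|²)/|1 + p² − 2 c₁ p|. -/

import Mathlib

/-!
Expanding `(1 + ω)/(1 - ω) = P = -z f'/(f - w₀) - p/(z - p) + p z/(1 - p z)` at `0` to second
order (after clearing denominators) gives two relations between the Taylor coefficients. With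
`c₁ = ω'(0)`, `c₂ = ω''(0)/2` and `D = 1 + p² - 2 c₁ p`, the `z`-coefficient gives `w₀ D = -p`, so
`D ≠ 0`, and the `z²`-coefficient gives `a₂ - 1/p - p (c₁² + p² - 2 c₁ p)/D = -p c₂/D`. Finally
`ω(z)/z` maps the disc into the closed disc (Schwarz lemma), so the Schwarz–Pick inequality at `0`
applied to it gives `|c₂| ≤ 1 - |c₁|²`.
-/

open Complex Metric Set

/-- The second Taylor coefficient `a₂(f) = f''(0)/2`. -/
noncomputable def a2 (f : ℂ → ℂ) : ℂ := iteratedDeriv 2 f 0 / 2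

/-- `f` belongs to the class `Σ*(p, w₀)` with associated holomorphic function `P`:
`f` is holomorphic on the unit disc except for a simple pole at `p`, `f 0 = 0`,
`f' 0 = 1`, `f` omits `w₀`, and
`P z = -z f'(z)/(f z - w₀) - p/(z - p) + p z/(1 - p z)` extends holomorphically
to the unit disc with `P 0 = 1` and `Re (P z) > 0` there. -/
def SigmaStarWith (p : ℝ) (w₀ : ℂ) (f P : ℂ → ℂ) : Prop :=
  (∃ g : ℂ → ℂ, DifferentiableOn ℂ g (ball (0 : ℂ) 1) ∧ g p ≠ 0 ∧
      ∀ z ∈ ball (0 : ℂ) 1, z ≠ (p : ℂ) → f z = g z / (z - p)) ∧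
  f 0 = 0 ∧ deriv f 0 = 1 ∧
  (∀ z ∈ ball (0 : ℂ) 1, z ≠ (p : ℂ) → f z ≠ w₀) ∧
  DifferentiableOn ℂ P (ball (0 : ℂ) 1) ∧ P 0 = 1 ∧
  (∀ z ∈ ball (0 : ℂ) 1, 0 < (P z).re) ∧
  (∀ z ∈ ball (0 : ℂ) 1, z ≠ (p : ℂ) →
    P z = -z * deriv f z / (f z - w₀) - p / (z - p) + p * z / (1 - p * z))

/-- `f` belongs to the class `Σ*(p, w₀)`. -/
def SigmaStar (p : ℝ) (w₀ : ℂ) (f : ℂ → ℂ) : Prop :=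
  ∃ P : ℂ → ℂ, SigmaStarWith p w₀ f P

/-- `ω` is the Schwarz function associated to `P`, i.e. a holomorphic self-map of
the unit disc fixing `0` with `P = (1 + ω)/(1 - ω)`. -/
def SchwarzOf (P ω : ℂ → ℂ) : Prop :=
  DifferentiableOn ℂ ω (ball (0 : ℂ) 1) ∧
  MapsTo ω (ball (0 : ℂ) 1) (ball (0 : ℂ) 1) ∧ ω 0 = 0 ∧
  ∀ z ∈ ball (0 : ℂ) 1, P z = (1 + ω z) / (1 - ω z)

open Filter Topology ComplexConjugate

section Jet

variable {𝕜 : Type*} [NontriviallyNormedField 𝕜] {f g : 𝕜 → 𝕜} {x a b c a' b' c' : 𝕜}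

structure HasJet2At (f : 𝕜 → 𝕜) (x a b c : 𝕜) : Prop where
  contDiffAt : ContDiffAt 𝕜 2 f x
  apply_eq : f x = a
  deriv_eq : deriv f x = b
  iteratedDeriv_two_eq : iteratedDeriv 2 f x = c

theorem ContDiffAt.hasJet2At (hf : ContDiffAt 𝕜 2 f x) :
    HasJet2At f x (f x) (deriv f x) (iteratedDeriv 2 f x) :=
  ⟨hf, rfl, rfl, rfl⟩

theorem hasJet2At_const (x a : 𝕜) : HasJet2At (fun _ => a) x a 0 0 :=
  ⟨contDiffAt_const, rfl, deriv_const x a, by simp [iteratedDeriv_const]⟩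

theorem hasJet2At_id (x : 𝕜) : HasJet2At (fun z => z) x x 1 0 :=
  ⟨contDiffAt_id, rfl, deriv_id x, by simp [iteratedDeriv_fun_id]⟩

namespace HasJet2At

theorem differentiableAt (hf : HasJet2At f x a b c) : DifferentiableAt 𝕜 f x :=
  hf.contDiffAt.differentiableAt (by norm_num)

theorem add (hf : HasJet2At f x a b c) (hg : HasJet2At g x a' b' c') :
    HasJet2At (fun z => f z + g z) x (a + a') (b + b') (c + c') where
  contDiffAt := hf.contDiffAt.add hg.contDiffAt
  apply_eq := by rw [hf.apply_eq, hg.apply_eq]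
  deriv_eq := by
    rw [deriv_fun_add hf.differentiableAt hg.differentiableAt, hf.deriv_eq, hg.deriv_eq]
  iteratedDeriv_two_eq := by
    rw [iteratedDeriv_fun_add hf.contDiffAt hg.contDiffAt, hf.iteratedDeriv_two_eq,
      hg.iteratedDeriv_two_eq]

theorem sub (hf : HasJet2At f x a b c) (hg : HasJet2At g x a' b' c') :
    HasJet2At (fun z => f z - g z) x (a - a') (b - b') (c - c') where
  contDiffAt := hf.contDiffAt.sub hg.contDiffAt
  apply_eq := by rw [hf.apply_eq, hg.apply_eq]
  deriv_eq := by
    rw [deriv_fun_sub hf.differentiableAt hg.differentiableAt, hf.deriv_eq, hg.deriv_eq]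
  iteratedDeriv_two_eq := by
    rw [iteratedDeriv_fun_sub hf.contDiffAt hg.contDiffAt, hf.iteratedDeriv_two_eq,
      hg.iteratedDeriv_two_eq]

theorem mul (hf : HasJet2At f x a b c) (hg : HasJet2At g x a' b' c') :
    HasJet2At (fun z => f z * g z) x (a * a') (a * b' + b * a') (a * c' + 2 * b * b' + c * a') where
  contDiffAt := hf.contDiffAt.mul hg.contDiffAt
  apply_eq := by rw [hf.apply_eq, hg.apply_eq]
  deriv_eq := by
    rw [deriv_fun_mul hf.differentiableAt hg.differentiableAt, hf.deriv_eq, hg.deriv_eq,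
      hf.apply_eq, hg.apply_eq]
    ring
  iteratedDeriv_two_eq := by
    rw [iteratedDeriv_fun_mul hf.contDiffAt hg.contDiffAt]
    norm_num [Finset.sum_range_succ]
    rw [hf.apply_eq, hg.apply_eq, hf.deriv_eq, hg.deriv_eq, hf.iteratedDeriv_two_eq,
      hg.iteratedDeriv_two_eq]

theorem congr_of_eventuallyEq (hf : HasJet2At f x a b c) (h : f =ᶠ[𝓝 x] g) :
    HasJet2At g x a b c where
  contDiffAt := hf.contDiffAt.congr_of_eventuallyEq h.symm
  apply_eq := h.eq_of_nhds ▸ hf.apply_eq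
  deriv_eq := h.deriv_eq ▸ hf.deriv_eq
  iteratedDeriv_two_eq := h.iteratedDeriv_eq 2 ▸ hf.iteratedDeriv_two_eq

theorem eq_zero_of_eventually_eq_zero (hf : HasJet2At f x a b c) (h : ∀ᶠ z in 𝓝 x, f z = 0) :
    a = 0 ∧ b = 0 ∧ c = 0 := by
  have h' : f =ᶠ[𝓝 x] fun _ => 0 := h
  refine ⟨hf.apply_eq ▸ h.self_of_nhds, ?_, ?_⟩
  · rw [← hf.deriv_eq, h'.deriv_eq, deriv_const]
  · rw [← hf.iteratedDeriv_two_eq, h'.iteratedDeriv_eq, iteratedDeriv_const]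
    simp

end HasJet2At

end Jet

theorem norm_sub_le_norm_one_sub_conj_mul {a w : ℂ} (ha : ‖a‖ ≤ 1) (hw : ‖w‖ ≤ 1) :
    ‖w - a‖ ≤ ‖1 - conj a * w‖ := by
  have key : ‖1 - conj a * w‖ ^ 2 - ‖w - a‖ ^ 2 = (1 - ‖a‖ ^ 2) * (1 - ‖w‖ ^ 2) := by
    simp only [← normSq_eq_norm_sq, normSq_apply, sub_re, sub_im, mul_re, mul_im, one_re,
      one_im, conj_re, conj_im]
    ring
  have : 0 ≤ (1 - ‖a‖ ^ 2) * (1 - ‖w‖ ^ 2) :=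
    mul_nonneg (by nlinarith [norm_nonneg a]) (by nlinarith [norm_nonneg w])
  exact (sq_le_sq₀ (norm_nonneg _) (norm_nonneg _)).mp (by linarith)

theorem one_sub_conj_mul_ne_zero {a w : ℂ} (ha : ‖a‖ < 1) (hw : ‖w‖ ≤ 1) :
    1 - conj a * w ≠ 0 := by
  refine sub_ne_zero.mpr fun h => ?_
  have : ‖conj a * w‖ < 1 := by
    rw [norm_mul, norm_conj]
    nlinarith [norm_nonneg a, norm_nonneg w]
  rw [← h, norm_one] at this
  exact this.false

theorem HasDerivAt.mobius_comp {φ : ℂ → ℂ} {φ' x : ℂ} (hφ : HasDerivAt φ φ' x)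
    (h : 1 - conj (φ x) * φ x ≠ 0) :
    HasDerivAt (fun z => (φ z - φ x) / (1 - conj (φ x) * φ z))
      (φ' / (1 - conj (φ x) * φ x)) x := by
  refine ((hφ.sub_const (φ x)).fun_div ((hφ.const_mul (conj (φ x))).const_sub 1) h).congr_deriv ?_
  rw [sub_self, zero_mul, sub_zero, sq, mul_div_mul_right _ _ h]

/-- Schwarz–Pick at the origin: unless `‖φ 0‖ = 1` (then `φ` is constant by the maximum principle),
compose `φ` with the disc automorphism sending `φ 0` to `0` and apply the Schwarz lemma. -/
theorem norm_deriv_le_one_sub_sq_norm {φ : ℂ → ℂ} (hd : DifferentiableOn ℂ φ (ball 0 1))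
    (hφ : MapsTo φ (ball 0 1) (closedBall 0 1)) :
    ‖deriv φ 0‖ ≤ 1 - ‖φ 0‖ ^ 2 := by
  have h0 : (0 : ℂ) ∈ ball (0 : ℂ) 1 := mem_ball_self one_pos
  have hnorm : ∀ z ∈ ball (0 : ℂ) 1, ‖φ z‖ ≤ 1 := fun z hz => mem_closedBall_zero_iff.mp (hφ hz)
  rcases (hnorm 0 h0).eq_or_lt with ha1 | ha1
  · have hmax : IsLocalMax (norm ∘ φ) 0 := by
      filter_upwards [isOpen_ball.mem_nhds h0] with z hz
      simpa [ha1] using hnorm z hz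
    have hconst : φ =ᶠ[𝓝 0] fun _ => φ 0 := eventually_eq_of_isLocalMax_norm
      (hd.eventually_differentiableAt (isOpen_ball.mem_nhds h0)) hmax
    rw [hconst.deriv_eq, deriv_const, norm_zero, ha1]
    norm_num
  · have hden : ∀ z ∈ ball (0 : ℂ) 1, 1 - conj (φ 0) * φ z ≠ 0 := fun z hz =>
      one_sub_conj_mul_ne_zero ha1 (hnorm z hz)
    have hmaps : MapsTo (fun z => (φ z - φ 0) / (1 - conj (φ 0) * φ z)) (ball 0 1)
        (closedBall 0 1) := fun z hz => by
      simpa [norm_div, div_le_one₀ (norm_pos_iff.mpr (hden z hz))] using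
        norm_sub_le_norm_one_sub_conj_mul ha1.le (hnorm z hz)
    have hdiff : DifferentiableOn ℂ (fun z => (φ z - φ 0) / (1 - conj (φ 0) * φ z)) (ball 0 1) :=
      (hd.sub_const _).div ((differentiableOn_const _).sub (hd.const_mul _)) hden
    have hschwarz := norm_deriv_le_one_of_mapsTo_ball hdiff (by simpa using hmaps) one_pos
    rw [((hd.differentiableAt (isOpen_ball.mem_nhds h0)).hasDerivAt.mobius_comp
      (hden 0 h0)).deriv] at hschwarz
    have hpos : 0 < 1 - ‖φ 0‖ ^ 2 := by nlinarith [norm_nonneg (φ 0)]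
    rwa [conj_mul', norm_div, ← ofReal_pow, ← ofReal_one, ← ofReal_sub, norm_real,
      Real.norm_of_nonneg hpos.le, div_le_one₀ hpos] at hschwarz

theorem norm_deriv_dslope_le_one_sub_sq_norm_deriv {ω : ℂ → ℂ}
    (hd : DifferentiableOn ℂ ω (ball 0 1)) (hω : MapsTo ω (ball 0 1) (closedBall 0 1))
    (h0 : ω 0 = 0) : ‖deriv (dslope ω 0) 0‖ ≤ 1 - ‖deriv ω 0‖ ^ 2 := by
  rw [← dslope_same ω 0]
  refine norm_deriv_le_one_sub_sq_norm
    ((differentiableOn_dslope (isOpen_ball.mem_nhds (mem_ball_self one_pos))).mpr hd)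
    fun z hz => ?_
  nth_rw 2 [← h0] at hω
  simpa using norm_dslope_le_div_of_mapsTo_ball hd hω hz

namespace SigmaStarWith

variable {p : ℝ} {w₀ : ℂ} {f P ω : ℂ → ℂ}

theorem analyticAt_zero (hf : SigmaStarWith p w₀ f P) (hp : p ≠ 0) : AnalyticAt ℂ f 0 := by
  obtain ⟨⟨g, hg, -, hfg⟩, -⟩ := hf
  have hball : ball (0 : ℂ) 1 ∈ 𝓝 0 := isOpen_ball.mem_nhds (mem_ball_self one_pos)
  have hne : ∀ᶠ z in 𝓝 (0 : ℂ), z ≠ (p : ℂ) := eventually_ne_nhds (by exact_mod_cast hp.symm)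
  have hq : AnalyticAt ℂ (fun z => g z / (z - p)) 0 :=
    (hg.analyticAt hball).fun_div (analyticAt_id.fun_sub analyticAt_const) (by simpa using hp)
  refine hq.congr ?_
  filter_upwards [hball, hne] with z hz hzp using (hfg z hz hzp).symm

/-- `P = (1 + ω)/(1 - ω)` and the defining formula of `P`, with all denominators cleared; note
`p (1 - p z) - p z (z - p) = p (1 - z²)`. -/
theorem eventually_cleared_eq_zero (hf : SigmaStarWith p w₀ f P) (hω : SchwarzOf P ω) (hp : p ≠ 0) :
    ∀ᶠ z in 𝓝 0, (f z - w₀) * ((1 + ω z) * ((z - p) * (1 - p * z)) +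
      (1 - ω z) * (p * (1 - z * z))) +
        (1 - ω z) * (z * deriv f z * ((z - p) * (1 - p * z))) = 0 := by
  obtain ⟨-, -, -, hfw, -, -, -, hPf⟩ := hf
  obtain ⟨-, hωm, -, hPω⟩ := hω
  have hball : ball (0 : ℂ) 1 ∈ 𝓝 0 := isOpen_ball.mem_nhds (mem_ball_self one_pos)
  have hne : ∀ᶠ z in 𝓝 (0 : ℂ), z ≠ (p : ℂ) := eventually_ne_nhds (by exact_mod_cast hp.symm)
  have hne' : ∀ᶠ z in 𝓝 (0 : ℂ), 1 - (p : ℂ) * z ≠ 0 :=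
    (continuous_const.sub (continuous_const.mul continuous_id)).continuousAt.eventually_ne
      (by simp)
  filter_upwards [hball, hne, hne'] with z hz hzp hpz
  have hω1 : 1 - ω z ≠ 0 := by
    have := mem_ball_zero_iff.mp (hωm hz)
    exact sub_ne_zero.mpr fun h => by simp [← h] at this
  have hfw' : f z - w₀ ≠ 0 := sub_ne_zero.mpr (hfw z hz hzp)
  have hzp' : z - p ≠ 0 := sub_ne_zero.mpr hzp
  have hpz' : 1 - z * p ≠ 0 := by rwa [mul_comm]
  have := (hPω z hz).symm.trans (hPf z hz hzp)
  field_simp at this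
  linear_combination this

/-- The `z`- and `z²`-coefficients of `eventually_cleared_eq_zero`, with `ω z = z * dslope ω 0 z`
so that `ω''(0)/2 = deriv (dslope ω 0) 0`. -/
theorem taylor_relations (hf : SigmaStarWith p w₀ f P) (hω : SchwarzOf P ω) (hp : p ≠ 0) :
    w₀ * (1 + p ^ 2 - 2 * deriv ω 0 * p) = -p ∧
    p * (1 + p ^ 2 - 2 * deriv ω 0 * p) * iteratedDeriv 2 f 0 =
      2 * (1 + p ^ 2 - 2 * deriv ω 0 * p) +
        2 * p ^ 2 * (deriv ω 0 ^ 2 + p ^ 2 - 2 * deriv ω 0 * p) -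
        2 * p ^ 2 * deriv (dslope ω 0) 0 := by
  have hball : ball (0 : ℂ) 1 ∈ 𝓝 0 := isOpen_ball.mem_nhds (mem_ball_self one_pos)
  have hfa := hf.analyticAt_zero hp
  have hf0 : f 0 = 0 := hf.2.1
  have hf'0 : deriv f 0 = 1 := hf.2.2.1
  have hG := ((differentiableOn_dslope hball).mpr hω.1).analyticAt hball
  have hωG : ∀ z, z * dslope ω 0 z = ω z := fun z => by
    simpa [hω.2.2.1] using sub_smul_dslope ω 0 z
  have jz := hasJet2At_id (0 : ℂ)
  have jc := hasJet2At_const (0 : ℂ)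
  have jf : HasJet2At f 0 0 1 (iteratedDeriv 2 f 0) := ⟨hfa.contDiffAt, hf0, hf'0, rfl⟩
  have jf' : HasJet2At (deriv f) 0 1 (iteratedDeriv 2 f 0) (iteratedDeriv 2 (deriv f) 0) :=
    ⟨hfa.deriv.contDiffAt, hf'0, by rw [iteratedDeriv_succ', iteratedDeriv_one], rfl⟩
  have jω := (jz.mul hG.contDiffAt.hasJet2At).congr_of_eventuallyEq (.of_forall hωG)
  have jQ := (jz.sub (jc p)).mul ((jc 1).sub ((jc p).mul jz))
  have jF := ((jf.sub (jc w₀)).mul (((jc 1).add jω).mul jQ |>.add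
    (((jc 1).sub jω).mul ((jc p).mul ((jc 1).sub (jz.mul jz)))))).add
    (((jc 1).sub jω).mul ((jz.mul jf').mul jQ))
  obtain ⟨-, e₁, e₂⟩ := jF.eq_zero_of_eventually_eq_zero (hf.eventually_cleared_eq_zero hω hp)
  simp only [dslope_same] at e₁ e₂
  constructor
  · linear_combination -e₁
  · linear_combination (-(1 + p ^ 2 - 2 * deriv ω 0 * p) / 2) * e₂
      + ((-4 * p + 2 * deriv ω 0 * (1 + p ^ 2) - 4 * p * deriv (dslope ω 0) 0) / 2) * e₁

end SigmaStarWith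

theorem stmt_10_general (p : ℝ) (hp : 0 < p ∧ p < 1) (w₀ : ℂ)
    (f P ω : ℂ → ℂ) (hf : SigmaStarWith p w₀ f P) (hω : SchwarzOf P ω) :
    ‖a2 f - 1 / p - (p : ℂ) *
        ((deriv ω 0) ^ 2 + (p : ℂ) ^ 2 - 2 * deriv ω 0 * p) /
          (1 + (p : ℂ) ^ 2 - 2 * deriv ω 0 * p)‖ ≤
      p * (1 - ‖deriv ω 0‖ ^ 2) /
        ‖1 + (p : ℂ) ^ 2 - 2 * deriv ω 0 * p‖ := by
  have hp0 : (p : ℂ) ≠ 0 := ofReal_ne_zero.mpr hp.1.ne'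
  obtain ⟨h₁, h₂⟩ := hf.taylor_relations hω hp.1.ne'
  have hD : 1 + (p : ℂ) ^ 2 - 2 * deriv ω 0 * p ≠ 0 := fun h => hp0 (by simpa [h] using h₁.symm)
  have key : a2 f - 1 / p - (p : ℂ) * ((deriv ω 0) ^ 2 + (p : ℂ) ^ 2 - 2 * deriv ω 0 * p) /
      (1 + (p : ℂ) ^ 2 - 2 * deriv ω 0 * p) =
      -(p * deriv (dslope ω 0) 0) / (1 + (p : ℂ) ^ 2 - 2 * deriv ω 0 * p) := by
    rw [eq_div_iff hD, sub_mul, div_mul_cancel₀ _ hD, a2]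
    field_simp
    linear_combination h₂
  have hc₂ := norm_deriv_dslope_le_one_sub_sq_norm_deriv hω.1
    (hω.2.1.mono_right ball_subset_closedBall) hω.2.2.1
  rw [key, norm_div, norm_neg, norm_mul, norm_real, Real.norm_of_nonneg hp.1.le]
  gcongr
  exact hp.1.le

theorem stmt_10 (p : ℝ) (hp : 0 < p ∧ p < 1) (w₀ : ℂ) (hw : w₀ ≠ 0)
    (f P ω : ℂ → ℂ) (hf : SigmaStarWith p w₀ f P) (hω : SchwarzOf P ω) :
    ‖a2 f - 1 / p - (p : ℂ) *
        ((deriv ω 0) ^ 2 + (p : ℂ) ^ 2 - 2 * deriv ω 0 * p) /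
          (1 + (p : ℂ) ^ 2 - 2 * deriv ω 0 * p)‖ ≤
      p * (1 - ‖deriv ω 0‖ ^ 2) /
        ‖1 + (p : ℂ) ^ 2 - 2 * deriv ω 0 * p‖ :=
  stmt_10_general p hp w₀ f P ω hf hω
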